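/- arXiv:2102.07976 — 6 statements merged into one kernel-verified Lean document; each statement's English description precedes it below -/
import Mathlib

section
/- Work in ℝᵐ with the Euclidean inner product and norm. Let Ψ, ψ : ℝᵐ → ℝ be convex and differentiable with ∇Ψ Lipschitz of constant L_F and ∇ψ Lipschitz of constant L_f. Let Y ⊆ ℝᵐ be nonempty, closed and convex, and let α, β ∈ (0,1], s_u ∈ (0, 1/L_F), s_l ∈ (0, 1/L_f), μ ∈ (0,1). Given w ∈ ℝᵐ, define z^u = w − s_u α ∇Ψ(w), z^l = w − s_l β ∇ψ(w), and w⁺ = Proj_Y( (1−μ) z^l + μ z^u ). Then for every y ∈ Y: (1−μ)β ψ(y) + (μ s_u α / s_l) Ψ(y) ≥ (1−μ)β ψ(z^l) + (μ s_u α / s_l) Ψ(z^u) + (μ/(2 s_l))(1 − α s_u L_F) ‖w − z^u‖² + (1/(2 s_l)) ‖y − w⁺‖² + (1/(2 s_l)) ‖((1−μ) z^l + μ z^u) − w⁺‖² + ((1−μ)/(2 s_l))(1 − β s_l L_f) ‖w − z^l‖² − (1/(2 s_l)) ‖y − w‖². -/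
/-! For a convex `g` with `L`-Lipschitz gradient, a gradient step `z = w - t ∇g(w)` satisfies the
three-point inequality `2t (g y - g z) ≥ (1 - tL) ‖w - z‖² + ‖y - z‖² - ‖y - w‖²`: add the
first-order convexity bound at `w` to the descent lemma `g z ≤ g w + ⟪∇g w, z - w⟫ + L/2 ‖z - w‖²`
and polarize `⟪w - z, y - z⟫`. Apply it to `ψ` and `Ψ` and average with weights `1 - μ`, `μ`.
With `p = (1 - μ) z^l + μ z^u`, the remaining terms are controlled by
`(1 - μ) ‖y - z^l‖² + μ ‖y - z^u‖² ≥ ‖y - p‖² ≥ ‖y - w⁺‖² + ‖p - w⁺‖²`, the second inequality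
because `p - w⁺` makes an obtuse angle with `Y - w⁺`. Dividing by `2 s_l` gives the claim. -/

open Set InnerProductSpace

section

variable {E : Type*} [NormedAddCommGroup E] [InnerProductSpace ℝ E]

lemma norm_sub_smul_add_smul_sq_add (y a b : E) (μ : ℝ) :
    ‖y - ((1 - μ) • a + μ • b)‖ ^ 2 + μ * (1 - μ) * ‖a - b‖ ^ 2
      = (1 - μ) * ‖y - a‖ ^ 2 + μ * ‖y - b‖ ^ 2 := by
  simp only [← real_inner_self_eq_norm_sq, inner_add_left, inner_add_right, inner_sub_left,
    inner_sub_right, real_inner_smul_left, real_inner_smul_right, real_inner_comm a b,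
    real_inner_comm a y, real_inner_comm b y]
  ring

lemma norm_sub_sq_add_norm_sub_sq_le_of_isMinOn {Y : Set E} (hY : Convex ℝ Y) {p q y : E}
    (hq : q ∈ Y) (hmin : IsMinOn (fun v => ‖p - v‖) Y q) (hy : y ∈ Y) :
    ‖y - q‖ ^ 2 + ‖p - q‖ ^ 2 ≤ ‖y - p‖ ^ 2 := by
  have hobtuse : ⟪p - q, y - q⟫_ℝ ≤ 0 :=
    (norm_eq_iInf_iff_real_inner_le_zero hY hq).1 (hmin.iInf_eq hq).symm y hy
  have hexpand := norm_sub_sq_real (y - q) (p - q)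
  rw [sub_sub_sub_cancel_right, real_inner_comm] at hexpand
  linarith

variable [CompleteSpace E] {g : E → ℝ} {g' : E → E}

lemma HasGradientAt.hasDerivAt_comp_add_smul {x d v : E} {t : ℝ}
    (hg : HasGradientAt g v (x + t • d)) :
    HasDerivAt (fun s : ℝ => g (x + s • d)) ⟪v, d⟫_ℝ t := by
  have hline : HasDerivAt (fun s : ℝ => x + s • d) d t := by
    simpa using ((hasDerivAt_id t).smul_const d).const_add x
  simpa [Function.comp_def] using hg.hasFDerivAt.comp_hasDerivAt t hline

lemma ConvexOn.add_inner_le_of_hasGradientAt (hg : ConvexOn ℝ univ g) {x v : E}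
    (hx : HasGradientAt g v x) (y : E) : g x + ⟪v, y - x⟫_ℝ ≤ g y := by
  have hline : ConvexOn ℝ univ fun t : ℝ => g (x + t • (y - x)) := by
    simpa [Function.comp_def, AffineMap.lineMap_apply_module', add_comm]
      using hg.comp_affineMap (AffineMap.lineMap x y)
  have h0 := hline.le_slope_of_hasDerivAt (mem_univ 0) (mem_univ 1) one_pos
    (HasGradientAt.hasDerivAt_comp_add_smul (by simpa using hx))
  simpa [slope_def_field, le_sub_iff_add_le'] using h0

lemma le_add_inner_add_sq_of_lipschitz_gradient (hg : ∀ x, HasGradientAt g (g' x) x) {L : ℝ}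
    (hlip : ∀ a b, ‖g' a - g' b‖ ≤ L * ‖a - b‖) (w z : E) :
    g z ≤ g w + ⟪g' w, z - w⟫_ℝ + L / 2 * ‖z - w‖ ^ 2 := by
  set d := z - w
  set h : ℝ → ℝ := fun t => g (w + t • d) - t * ⟪g' w, d⟫_ℝ - L / 2 * t ^ 2 * ‖d‖ ^ 2
  have hderiv (t : ℝ) :
      HasDerivAt h (⟪g' (w + t • d) - g' w, d⟫_ℝ - L * t * ‖d‖ ^ 2) t := by
    refine (((hg (w + t • d)).hasDerivAt_comp_add_smul.sub
      ((hasDerivAt_id t).mul_const ⟪g' w, d⟫_ℝ)).sub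
      (((hasDerivAt_pow 2 t).const_mul (L / 2)).mul_const (‖d‖ ^ 2))).congr_deriv ?_
    simp only [inner_sub_left]
    ring
  have hderiv_nonpos (t : ℝ) (ht : 0 < t) :
      ⟪g' (w + t • d) - g' w, d⟫_ℝ - L * t * ‖d‖ ^ 2 ≤ 0 := by
    have hgrad : ‖g' (w + t • d) - g' w‖ ≤ L * (t * ‖d‖) := by
      simpa [norm_smul, abs_of_pos ht] using hlip (w + t • d) w
    nlinarith [real_inner_le_norm (g' (w + t • d) - g' w) d,
      mul_le_mul_of_nonneg_right hgrad (norm_nonneg d)]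
  have hanti : AntitoneOn h (Ici 0) := by
    refine antitoneOn_of_deriv_nonpos (convex_Ici 0)
      (fun t _ => (hderiv t).continuousAt.continuousWithinAt)
      (fun t _ => (hderiv t).differentiableAt.differentiableWithinAt) fun t ht => ?_
    rw [(hderiv t).deriv]
    exact hderiv_nonpos t (by simpa using ht)
  have h10 : h 1 ≤ h 0 := hanti self_mem_Ici (by norm_num : (1:ℝ) ∈ Ici 0) zero_le_one
  simp only [h, d, one_smul, add_sub_cancel, one_mul, one_pow, mul_one, zero_smul, add_zero,
    zero_mul, sub_zero, ne_eq, OfNat.ofNat_ne_zero, not_false_eq_true, zero_pow, mul_zero,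
    tsub_le_iff_right] at h10
  linarith

lemma ConvexOn.gradient_step_le (hconv : ConvexOn ℝ univ g) (hg : ∀ x, HasGradientAt g (g' x) x)
    {L : ℝ} (hlip : ∀ a b, ‖g' a - g' b‖ ≤ L * ‖a - b‖) {t : ℝ} (ht : 0 ≤ t) {w z : E}
    (hz : z = w - t • g' w) (y : E) :
    (1 - t * L) * ‖w - z‖ ^ 2 + ‖y - z‖ ^ 2 - ‖y - w‖ ^ 2 ≤ 2 * t * (g y - g z) := by
  have hgap : ⟪g' w, y - z⟫_ℝ - L / 2 * ‖w - z‖ ^ 2 ≤ g y - g z := by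
    have hsplit : ⟪g' w, y - w⟫_ℝ = ⟪g' w, y - z⟫_ℝ + ⟪g' w, z - w⟫_ℝ := by
      rw [← inner_add_right, sub_add_sub_cancel]
    have hconvex := hconv.add_inner_le_of_hasGradientAt (hg w) y
    have hdescent := le_add_inner_add_sq_of_lipschitz_gradient hg hlip w z
    rw [norm_sub_rev] at hdescent
    linarith
  have hinner : ⟪w - z, y - z⟫_ℝ = t * ⟪g' w, y - z⟫_ℝ := by
    rw [hz, sub_sub_cancel, real_inner_smul_left]
  have hpolar := norm_sub_sq_real (w - z) (y - z)
  rw [sub_sub_sub_cancel_right, norm_sub_rev w y] at hpolar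
  nlinarith [mul_le_mul_of_nonneg_left hgap ht]

end

theorem stmt2_general {m : ℕ}
    (Ψ ψ : EuclideanSpace ℝ (Fin m) → ℝ)
    (Ψ' ψ' : EuclideanSpace ℝ (Fin m) → EuclideanSpace ℝ (Fin m))
    (hΨconv : ConvexOn ℝ univ Ψ) (hψconv : ConvexOn ℝ univ ψ)
    (hΨgrad : ∀ w, HasGradientAt Ψ (Ψ' w) w) (hψgrad : ∀ w, HasGradientAt ψ (ψ' w) w)
    (LF Lf : ℝ)
    (hΨlip : ∀ a b, ‖Ψ' a - Ψ' b‖ ≤ LF * ‖a - b‖)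
    (hψlip : ∀ a b, ‖ψ' a - ψ' b‖ ≤ Lf * ‖a - b‖)
    (Y : Set (EuclideanSpace ℝ (Fin m)))
    (hYconv : Convex ℝ Y)
    (α β su sl μ : ℝ)
    (hα : α ∈ Ioc (0 : ℝ) 1) (hβ : β ∈ Ioc (0 : ℝ) 1)
    (hsu : su ∈ Ioo 0 (1 / LF)) (hsl : sl ∈ Ioo 0 (1 / Lf)) (hμ : μ ∈ Ioo (0 : ℝ) 1)
    (w zu zl wplus : EuclideanSpace ℝ (Fin m))
    (hzu : zu = w - (su * α) • Ψ' w) (hzl : zl = w - (sl * β) • ψ' w)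
    (hwplusY : wplus ∈ Y)
    (hwplus : ∀ v ∈ Y, ‖((1 - μ) • zl + μ • zu) - wplus‖ ≤ ‖((1 - μ) • zl + μ • zu) - v‖) :
    ∀ y ∈ Y,
      (1 - μ) * β * ψ y + (μ * su * α / sl) * Ψ y ≥
        (1 - μ) * β * ψ zl + (μ * su * α / sl) * Ψ zu
        + (μ / (2 * sl)) * (1 - α * su * LF) * ‖w - zu‖ ^ 2
        + (1 / (2 * sl)) * ‖y - wplus‖ ^ 2
        + (1 / (2 * sl)) * ‖((1 - μ) • zl + μ • zu) - wplus‖ ^ 2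
        + ((1 - μ) / (2 * sl)) * (1 - β * sl * Lf) * ‖w - zl‖ ^ 2
        - (1 / (2 * sl)) * ‖y - w‖ ^ 2 := by
  intro y hy
  obtain ⟨hα0, -⟩ := hα
  obtain ⟨hβ0, -⟩ := hβ
  obtain ⟨hsu0, -⟩ := hsu
  obtain ⟨hsl0, -⟩ := hsl
  obtain ⟨hμ0, hμ1⟩ := hμ
  set p := (1 - μ) • zl + μ • zu
  have hψstep := hψconv.gradient_step_le hψgrad hψlip (by positivity) hzl y
  have hΨstep := hΨconv.gradient_step_le hΨgrad hΨlip (by positivity) hzu y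
  have hproj := norm_sub_sq_add_norm_sub_sq_le_of_isMinOn hYconv hwplusY hwplus hy
  have hmix := norm_sub_smul_add_smul_sq_add y zl zu μ
  have hgap : 0 ≤ (1 - μ) * (2 * (sl * β) * (ψ y - ψ zl) - ((1 - sl * β * Lf) * ‖w - zl‖ ^ 2
        + ‖y - zl‖ ^ 2 - ‖y - w‖ ^ 2))
      + μ * (2 * (su * α) * (Ψ y - Ψ zu) - ((1 - su * α * LF) * ‖w - zu‖ ^ 2
        + ‖y - zu‖ ^ 2 - ‖y - w‖ ^ 2))
      + ((1 - μ) * ‖y - zl‖ ^ 2 + μ * ‖y - zu‖ ^ 2 - ‖y - wplus‖ ^ 2 - ‖p - wplus‖ ^ 2) := by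
    have hspread : 0 ≤ μ * (1 - μ) * ‖zl - zu‖ ^ 2 := by
      have := sub_pos.2 hμ1
      positivity
    refine add_nonneg (add_nonneg ?_ ?_) ?_
    · exact mul_nonneg (by linarith) (by linarith)
    · exact mul_nonneg hμ0.le (by linarith)
    · linarith
  rw [ge_iff_le, ← sub_nonneg]
  refine (div_nonneg hgap (by positivity : (0 : ℝ) ≤ 2 * sl)).trans_eq ?_
  field_simp
  ring

theorem stmt2 {m : ℕ}
    (Ψ ψ : EuclideanSpace ℝ (Fin m) → ℝ)
    (Ψ' ψ' : EuclideanSpace ℝ (Fin m) → EuclideanSpace ℝ (Fin m))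
    (hΨconv : ConvexOn ℝ univ Ψ) (hψconv : ConvexOn ℝ univ ψ)
    (hΨgrad : ∀ w, HasGradientAt Ψ (Ψ' w) w) (hψgrad : ∀ w, HasGradientAt ψ (ψ' w) w)
    (LF Lf : ℝ)
    (hΨlip : ∀ a b, ‖Ψ' a - Ψ' b‖ ≤ LF * ‖a - b‖)
    (hψlip : ∀ a b, ‖ψ' a - ψ' b‖ ≤ Lf * ‖a - b‖)
    (Y : Set (EuclideanSpace ℝ (Fin m)))
    (hYne : Y.Nonempty) (hYcl : IsClosed Y) (hYconv : Convex ℝ Y)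
    (α β su sl μ : ℝ)
    (hα : α ∈ Ioc (0 : ℝ) 1) (hβ : β ∈ Ioc (0 : ℝ) 1)
    (hsu : su ∈ Ioo 0 (1 / LF)) (hsl : sl ∈ Ioo 0 (1 / Lf)) (hμ : μ ∈ Ioo (0 : ℝ) 1)
    (w zu zl wplus : EuclideanSpace ℝ (Fin m))
    (hzu : zu = w - (su * α) • Ψ' w) (hzl : zl = w - (sl * β) • ψ' w)
    (hwplusY : wplus ∈ Y)
    (hwplus : ∀ v ∈ Y, ‖((1 - μ) • zl + μ • zu) - wplus‖ ≤ ‖((1 - μ) • zl + μ • zu) - v‖) :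
    ∀ y ∈ Y,
      (1 - μ) * β * ψ y + (μ * su * α / sl) * Ψ y ≥
        (1 - μ) * β * ψ zl + (μ * su * α / sl) * Ψ zu
        + (μ / (2 * sl)) * (1 - α * su * LF) * ‖w - zu‖ ^ 2
        + (1 / (2 * sl)) * ‖y - wplus‖ ^ 2
        + (1 / (2 * sl)) * ‖((1 - μ) • zl + μ • zu) - wplus‖ ^ 2
        + ((1 - μ) / (2 * sl)) * (1 - β * sl * Lf) * ‖w - zl‖ ^ 2
        - (1 / (2 * sl)) * ‖y - w‖ ^ 2 :=
  stmt2_general Ψ ψ Ψ' ψ' hΨconv hψconv hΨgrad hψgrad LF Lf hΨlip hψlip Y hYconv α β su sl μ hα hβ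
    hsu hsl hμ w zu zl wplus hzu hzl hwplusY hwplus
end

section
/- Work in ℝᵐ with the Euclidean norm. Let Ψ, ψ : ℝᵐ → ℝ be convex and differentiable with ∇Ψ Lipschitz of constant L_F and ∇ψ Lipschitz of constant L_f. Let Y ⊆ ℝᵐ be nonempty, compact and convex, s_u ∈ (0, 1/L_F), s_l ∈ (0, 1/L_f), μ ∈ (0,1), α_k = 1/(k+1), and β_k ∈ [β̲, 1] with β̲ > 0 and |β_k − β_{k−1}| ≤ c_β/(k+1)² for some c_β > 0. Starting from y₀ ∈ Y, define y_{k+1} = Proj_Y( y_k − ( μ α_k s_u ∇Ψ(y_k) + (1−μ) β_k s_l ∇ψ(y_k) ) ), z^u_{k+1} = y_k − s_u α_k ∇Ψ(y_k), z^l_{k+1} = y_k − s_l β_k ∇ψ(y_k). Let D = sup_{y,y'∈Y} ‖y − y'‖, M_F = sup_{y∈Y} ‖∇Ψ(y)‖, M_f = sup_{y∈Y} ‖∇ψ(y)‖. Then for every k ≥ 1: ‖y_{k+1} − y_k‖² ≤ ‖y_k − y_{k−1}‖² + (μ/(k+1)²) ‖y_{k−1} − z^u_k‖² + 2(1−μ)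 s_l c_β D M_f /(k+1)² + 2 μ s_u D M_F /(k(k+1)) + ((1−μ) c_β² / (β̲² (k+1)⁴)) ‖y_{k−1} − z^l_k‖². -/
open Set Metric
open scoped RealInnerProductSpace

/-!
The iterate `y (k + 1)` is the projection onto `Y` of `μ • zu (k + 1) + (1 - μ) • zl (k + 1)`.
The projection onto a convex set is nonexpansive and `‖·‖ ^ 2` is convex, so
`‖y (k + 1) - y k‖ ^ 2 ≤ μ ‖zu (k + 1) - zu k‖ ^ 2 + (1 - μ) ‖zl (k + 1) - zl k‖ ^ 2`.
Each of `zu (k + 1) - zu k` and `zl (k + 1) - zl k` is a difference of gradient steps from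
`y k` and `y (k - 1)` whose step sizes differ by `O(1 / k ^ 2)`. By Baillon–Haddad
cocoercivity, a gradient step of a convex `L`-smooth function with step size at most `2 / L` is
nonexpansive, so such a difference is `‖y k - y (k - 1)‖` plus a perturbation of norm
`|Δ step| * ‖∇ f (y (k - 1))‖`, which is controlled by `D`, `MF` and `Mf`.
-/

section SmoothConvex

variable {E : Type*} [NormedAddCommGroup E] [InnerProductSpace ℝ E] [CompleteSpace E]
  {f : E → ℝ} {f' : E → E} {L : ℝ}

theorem hasDerivAt_comp_lineMap_of_hasGradientAt (hf : ∀ x, HasGradientAt f (f' x) x)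
    (a b : E) (t : ℝ) :
    HasDerivAt (f ∘ AffineMap.lineMap a b) ⟪f' (AffineMap.lineMap a b t), b - a⟫ t := by
  simpa using (hf _).hasFDerivAt.comp_hasDerivAt t AffineMap.hasDerivAt_lineMap

theorem ConvexOn.add_inner_gradient_le (hconv : ConvexOn ℝ univ f)
    (hf : ∀ x, HasGradientAt f (f' x) x) (a b : E) : f a + ⟪f' a, b - a⟫ ≤ f b := by
  have h := (hconv.comp_affineMap (AffineMap.lineMap a b)).le_slope_of_hasDerivAt
    (mem_univ 0) (mem_univ 1) zero_lt_one (hasDerivAt_comp_lineMap_of_hasGradientAt hf a b 0)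
  simp only [AffineMap.lineMap_apply_zero, slope_def_field, Function.comp_apply,
    AffineMap.lineMap_apply_one, sub_zero, div_one] at h
  linarith

theorem le_add_inner_gradient_add_sq (hf : ∀ x, HasGradientAt f (f' x) x)
    (hlip : ∀ a b, ‖f' a - f' b‖ ≤ L * ‖a - b‖) (a b : E) :
    f b ≤ f a + ⟪f' a, b - a⟫ + L / 2 * ‖b - a‖ ^ 2 := by
  set g : ℝ → ℝ := fun s => (f ∘ AffineMap.lineMap a b) s - s * ⟪f' a, b - a⟫
    - L / 2 * ‖b - a‖ ^ 2 * s ^ 2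
  have hg : ∀ s, HasDerivAt g
      (⟪f' (AffineMap.lineMap a b s) - f' a, b - a⟫ - L * ‖b - a‖ ^ 2 * s) s := by
    intro s
    refine (((hasDerivAt_comp_lineMap_of_hasGradientAt hf a b s).sub
      ((hasDerivAt_id s).mul_const _)).sub ((hasDerivAt_pow 2 s).const_mul _)).congr_deriv ?_
    rw [inner_sub_left]; push_cast; ring
  have hanti : AntitoneOn g (Icc 0 1) := by
    refine antitoneOn_of_hasDerivWithinAt_nonpos (convex_Icc 0 1)
      (HasDerivAt.continuousOn fun s _ => hg s) (fun s _ => (hg s).hasDerivWithinAt) ?_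
    intro s hs
    rw [interior_Icc] at hs
    have hdist : ‖AffineMap.lineMap a b s - a‖ = s * ‖b - a‖ := by
      rw [← dist_eq_norm, dist_lineMap_left, Real.norm_of_nonneg hs.1.le, dist_comm,
        dist_eq_norm]
    refine sub_nonpos.2 ?_
    calc ⟪f' (AffineMap.lineMap a b s) - f' a, b - a⟫
        ≤ ‖f' (AffineMap.lineMap a b s) - f' a‖ * ‖b - a‖ := real_inner_le_norm _ _
      _ ≤ L * (s * ‖b - a‖) * ‖b - a‖ := by
          gcongr; exact hdist ▸ hlip _ _
      _ = L * ‖b - a‖ ^ 2 * s := by ring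
  have := hanti (left_mem_Icc.2 zero_le_one) (right_mem_Icc.2 zero_le_one) zero_le_one
  simp only [g, Function.comp_apply, AffineMap.lineMap_apply_one, AffineMap.lineMap_apply_zero]
    at this
  linarith

theorem ConvexOn.add_inner_gradient_add_sq_le (hconv : ConvexOn ℝ univ f)
    (hf : ∀ x, HasGradientAt f (f' x) x) (hlip : ∀ a b, ‖f' a - f' b‖ ≤ L * ‖a - b‖)
    (hL : 0 < L) (a b : E) :
    f b + ⟪f' b, a - b⟫ + 1 / (2 * L) * ‖f' a - f' b‖ ^ 2 ≤ f a := by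
  -- evaluate the lower bound at `b` and the upper bound at `a` at `a - L⁻¹ • (f' a - f' b)`
  set G := f' a - f' b
  have hlow := hconv.add_inner_gradient_le hf b (a - L⁻¹ • G)
  have hup := le_add_inner_gradient_add_sq hf hlip a (a - L⁻¹ • G)
  have hGG : L⁻¹ * ⟪f' a, G⟫ - L⁻¹ * ⟪f' b, G⟫ = L⁻¹ * ‖G‖ ^ 2 := by
    rw [← mul_sub, ← inner_sub_left, real_inner_self_eq_norm_sq]
  rw [show a - L⁻¹ • G - b = (a - b) - L⁻¹ • G by abel, inner_sub_right,
    real_inner_smul_right] at hlow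
  rw [show a - L⁻¹ • G - a = -(L⁻¹ • G) by abel, inner_neg_right, real_inner_smul_right,
    norm_neg, norm_smul, Real.norm_of_nonneg (inv_nonneg.2 hL.le)] at hup
  have h1 : L / 2 * (L⁻¹ * ‖G‖) ^ 2 = 1 / (2 * L) * ‖G‖ ^ 2 := by field_simp
  have h2 : L⁻¹ * ‖G‖ ^ 2 = 2 * (1 / (2 * L) * ‖G‖ ^ 2) := by field_simp
  linarith

theorem ConvexOn.sq_norm_gradient_sub_le_inner (hconv : ConvexOn ℝ univ f)
    (hf : ∀ x, HasGradientAt f (f' x) x) (hlip : ∀ a b, ‖f' a - f' b‖ ≤ L * ‖a - b‖)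
    (hL : 0 < L) (a b : E) :
    ‖f' a - f' b‖ ^ 2 ≤ L * ⟪f' a - f' b, a - b⟫ := by
  have hab := hconv.add_inner_gradient_add_sq_le hf hlip hL a b
  have hba := hconv.add_inner_gradient_add_sq_le hf hlip hL b a
  rw [norm_sub_rev] at hba
  have hsum : 1 / L * ‖f' a - f' b‖ ^ 2 ≤ ⟪f' a - f' b, a - b⟫ := by
    rw [← neg_sub a b, inner_neg_right] at hba
    rw [inner_sub_left]
    have : 1 / L * ‖f' a - f' b‖ ^ 2 = 2 * (1 / (2 * L) * ‖f' a - f' b‖ ^ 2) := by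
      field_simp
    linarith
  rwa [div_mul_eq_mul_div, one_mul, div_le_iff₀' hL] at hsum

theorem ConvexOn.norm_gradientStep_sub_le (hconv : ConvexOn ℝ univ f)
    (hf : ∀ x, HasGradientAt f (f' x) x) (hlip : ∀ a b, ‖f' a - f' b‖ ≤ L * ‖a - b‖)
    (hL : 0 < L) {t : ℝ} (ht : 0 ≤ t) (htL : t * L ≤ 2) (a b : E) :
    ‖(a - t • f' a) - (b - t • f' b)‖ ≤ ‖a - b‖ := by
  have hco := hconv.sq_norm_gradient_sub_le_inner hf hlip hL a b
  have hinner : 0 ≤ ⟪f' a - f' b, a - b⟫ :=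
    nonneg_of_mul_nonneg_right (le_trans (sq_nonneg _) hco) hL
  rw [← sq_le_sq₀ (norm_nonneg _) (norm_nonneg _),
    show (a - t • f' a) - (b - t • f' b) = (a - b) - t • (f' a - f' b) by module,
    norm_sub_sq_real, real_inner_smul_right, norm_smul, mul_pow, Real.norm_eq_abs, sq_abs,
    real_inner_comm]
  nlinarith [mul_le_mul_of_nonneg_left hco (sq_nonneg t), mul_nonneg (mul_nonneg ht hinner)
    (sub_nonneg.2 htL)]

theorem ConvexOn.sq_norm_gradientStep_sub_gradientStep_le (hconv : ConvexOn ℝ univ f)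
    (hf : ∀ x, HasGradientAt f (f' x) x) (hlip : ∀ a b, ‖f' a - f' b‖ ≤ L * ‖a - b‖)
    (hL : 0 < L) {t t' D ε₁ ε₂ : ℝ} (ht : 0 ≤ t) (htL : t * L ≤ 2) {a b : E}
    (hab : ‖a - b‖ ≤ D) (h₁ : |t' - t| * ‖f' b‖ ≤ ε₁) (h₂ : |t' - t| * ‖f' b‖ ≤ ε₂) :
    ‖(a - t • f' a) - (b - t' • f' b)‖ ^ 2 ≤ ‖a - b‖ ^ 2 + 2 * D * ε₁ + ε₂ ^ 2 := by
  have hnorm : ‖(a - t • f' a) - (b - t' • f' b)‖ ≤ ‖a - b‖ + |t' - t| * ‖f' b‖ := by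
    rw [show (a - t • f' a) - (b - t' • f' b)
        = ((a - t • f' a) - (b - t • f' b)) + (t' - t) • f' b by module, ← Real.norm_eq_abs,
      ← norm_smul]
    refine (norm_add_le _ _).trans ?_
    gcongr
    exact hconv.norm_gradientStep_sub_le hf hlip hL ht htL a b
  have he : 0 ≤ |t' - t| * ‖f' b‖ := by positivity
  have hr := norm_nonneg (a - b)
  nlinarith [pow_le_pow_left₀ (norm_nonneg _) hnorm 2]

theorem ConvexOn.sq_norm_gradientStep_sub_le_harmonic (hconv : ConvexOn ℝ univ f)
    (hf : ∀ x, HasGradientAt f (f' x) x) (hlip : ∀ a b, ‖f' a - f' b‖ ≤ L * ‖a - b‖)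
    (hL : 0 < L) {s κ D M : ℝ} (hs : 0 ≤ s) (hsL : s * L ≤ 2) (hκ : 0 < κ) {a b : E}
    (hab : ‖a - b‖ ≤ D) (hM : ‖f' b‖ ≤ M) :
    ‖(a - (s * (1 / (κ + 1))) • f' a) - (b - (s * (1 / κ)) • f' b)‖ ^ 2
      ≤ ‖a - b‖ ^ 2 + 2 * s * D * M / (κ * (κ + 1))
        + ‖(s * (1 / κ)) • f' b‖ ^ 2 / (κ + 1) ^ 2 := by
  have hdiff : |s * (1 / κ) - s * (1 / (κ + 1))| = s * (1 / κ) / (κ + 1) := by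
    rw [abs_of_nonneg (by field_simp; linarith)]
    field_simp
    ring
  have hstep : s * (1 / (κ + 1)) * L ≤ 2 :=
    (mul_le_mul_of_nonneg_right (mul_le_of_le_one_right hs
      (div_le_one_of_le₀ (by linarith) (by linarith))) hL.le).trans hsL
  have := hconv.sq_norm_gradientStep_sub_gradientStep_le hf hlip hL (by positivity) hstep hab
    (ε₁ := s * M / (κ * (κ + 1))) (ε₂ := ‖(s * (1 / κ)) • f' b‖ / (κ + 1))
    (by rw [hdiff]; field_simp; gcongr)
    (by rw [hdiff, norm_smul, Real.norm_of_nonneg (by positivity)]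
        exact (div_mul_eq_mul_div _ _ _).le)
  exact this.trans_eq (by rw [div_pow]; ring)

theorem ConvexOn.sq_norm_gradientStep_sub_le_of_abs_sub_le (hconv : ConvexOn ℝ univ f)
    (hf : ∀ x, HasGradientAt f (f' x) x) (hlip : ∀ a b, ‖f' a - f' b‖ ≤ L * ‖a - b‖)
    (hL : 0 < L) {s β β' βlow δ D M : ℝ} (hs : 0 ≤ s) (hsL : s * L ≤ 2) (hβ : β ∈ Icc 0 1)
    (hβlow : 0 < βlow) (hβ' : βlow ≤ β') (hδ : |β - β'| ≤ δ) {a b : E}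
    (hab : ‖a - b‖ ≤ D) (hM : ‖f' b‖ ≤ M) :
    ‖(a - (s * β) • f' a) - (b - (s * β') • f' b)‖ ^ 2
      ≤ ‖a - b‖ ^ 2 + 2 * s * δ * D * M + (δ / βlow) ^ 2 * ‖(s * β') • f' b‖ ^ 2 := by
  have hdiff : |s * β' - s * β| = s * |β - β'| := by
    rw [← mul_sub, abs_mul, abs_of_nonneg hs, abs_sub_comm]
  have hstep : s * β * L ≤ 2 :=
    (mul_le_mul_of_nonneg_right (mul_le_of_le_one_right hs hβ.2) hL.le).trans hsL
  have hδ0 : 0 ≤ δ := (abs_nonneg _).trans hδ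
  have hδβ : δ ≤ δ / βlow * β' := by
    rw [div_mul_eq_mul_div, le_div_iff₀ hβlow]
    exact mul_le_mul_of_nonneg_left hβ' hδ0
  have := hconv.sq_norm_gradientStep_sub_gradientStep_le hf hlip hL
    (mul_nonneg hs hβ.1) hstep hab (ε₁ := s * δ * M)
    (ε₂ := δ / βlow * ‖(s * β') • f' b‖)
    (by rw [hdiff]; exact mul_le_mul (by gcongr) hM (norm_nonneg _) (mul_nonneg hs hδ0))
    (by
      rw [hdiff, norm_smul, Real.norm_of_nonneg (mul_nonneg hs (hβlow.le.trans hβ'))]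
      calc s * |β - β'| * ‖f' b‖ ≤ s * (δ / βlow * β') * ‖f' b‖ := by
            gcongr; exact hδ.trans hδβ
        _ = δ / βlow * (s * β' * ‖f' b‖) := by ring)
  exact this.trans_eq (by ring)

end SmoothConvex

section Projection

variable {E : Type*} [NormedAddCommGroup E] [InnerProductSpace ℝ E]

theorem real_inner_sub_le_zero_of_nearest {Y : Set E} (hY : Convex ℝ Y) {z p : E}
    (hp : p ∈ Y) (hnear : ∀ w ∈ Y, ‖z - p‖ ≤ ‖z - w‖) {w : E} (hw : w ∈ Y) :
    ⟪z - p, w - p⟫ ≤ 0 := by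
  have : Nonempty Y := ⟨⟨p, hp⟩⟩
  refine (norm_eq_iInf_iff_real_inner_le_zero hY hp).1 (le_antisymm ?_ ?_) w hw
  · exact le_ciInf fun w => hnear w w.2
  · exact ciInf_le (f := fun w : Y => ‖z - w‖) ⟨0, by rintro _ ⟨w, rfl⟩; exact norm_nonneg _⟩
      ⟨p, hp⟩

theorem norm_proj_sub_proj_le_of_nearest {Y : Set E} (hY : Convex ℝ Y) {proj : E → E}
    (hprojY : ∀ z, proj z ∈ Y) (hprojnear : ∀ z, ∀ w ∈ Y, ‖z - proj z‖ ≤ ‖z - w‖) (a b : E) :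
    ‖proj a - proj b‖ ≤ ‖a - b‖ := by
  have ha := real_inner_sub_le_zero_of_nearest hY (hprojY a) (hprojnear a) (hprojY b)
  have hb := real_inner_sub_le_zero_of_nearest hY (hprojY b) (hprojnear b) (hprojY a)
  set P := proj a - proj b
  have hP : ‖P‖ ^ 2 ≤ ⟪a - b, P⟫ := by
    have : ⟪a - b, P⟫ - ‖P‖ ^ 2
        = -⟪a - proj a, proj b - proj a⟫ - ⟪b - proj b, proj a - proj b⟫ := by
      rw [show proj b - proj a = -P by simp [P], inner_neg_right, neg_neg, ← inner_sub_left,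
        ← real_inner_self_eq_norm_sq, ← inner_sub_left]
      congr 1
      simp only [P]
      abel
    linarith
  nlinarith [real_inner_le_norm (a - b) P, norm_nonneg P, norm_nonneg (a - b)]

theorem sq_norm_smul_add_one_sub_smul_le {μ : ℝ} (hμ : μ ∈ Icc 0 1) (u v : E) :
    ‖μ • u + (1 - μ) • v‖ ^ 2 ≤ μ * ‖u‖ ^ 2 + (1 - μ) * ‖v‖ ^ 2 := by
  rw [norm_add_sq_real, real_inner_smul_left, real_inner_smul_right, norm_smul, norm_smul,
    mul_pow, mul_pow, Real.norm_eq_abs, Real.norm_eq_abs, sq_abs, sq_abs]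
  nlinarith [norm_sub_sq_real u v, mul_nonneg hμ.1 (sub_nonneg.2 hμ.2), sq_nonneg ‖u - v‖]

theorem sq_norm_proj_convexComb_sub_le_of_nearest {Y : Set E} (hY : Convex ℝ Y)
    {proj : E → E} (hprojY : ∀ z, proj z ∈ Y)
    (hprojnear : ∀ z, ∀ w ∈ Y, ‖z - proj z‖ ≤ ‖z - w‖) {μ : ℝ} (hμ : μ ∈ Icc 0 1)
    (u u' v v' : E) :
    ‖proj (μ • u + (1 - μ) • v) - proj (μ • u' + (1 - μ) • v')‖ ^ 2
      ≤ μ * ‖u - u'‖ ^ 2 + (1 - μ) * ‖v - v'‖ ^ 2 := by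
  refine (pow_le_pow_left₀ (norm_nonneg _)
    (norm_proj_sub_proj_le_of_nearest hY hprojY hprojnear _ _) 2).trans ?_
  rw [show (μ • u + (1 - μ) • v) - (μ • u' + (1 - μ) • v')
      = μ • (u - u') + (1 - μ) • (v - v') by module]
  exact sq_norm_smul_add_one_sub_smul_le hμ _ _

end Projection

theorem continuous_of_norm_sub_le_mul {E F : Type*} [SeminormedAddCommGroup E]
    [SeminormedAddCommGroup F] {g : E → F} {L : ℝ} (hg : ∀ a b, ‖g a - g b‖ ≤ L * ‖a - b‖) :
    Continuous g :=
  (LipschitzWith.of_dist_le' (by simpa only [dist_eq_norm] using hg)).continuous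

theorem IsCompact.le_ciSup_of_continuousOn {X : Type*} [TopologicalSpace X] {Y : Set X}
    (hY : IsCompact Y) {g : X → ℝ} (hg : ContinuousOn g Y) {x : X} (hx : x ∈ Y) :
    g x ≤ ⨆ w : Y, g w := by
  refine le_ciSup (f := fun w : Y => g w) ?_ ⟨x, hx⟩
  rw [← image_eq_range]
  exact hY.bddAbove_image hg

theorem stmt6_general {m : ℕ}
    (Ψ ψ : EuclideanSpace ℝ (Fin m) → ℝ)
    (Ψ' ψ' : EuclideanSpace ℝ (Fin m) → EuclideanSpace ℝ (Fin m))
    (hΨconv : ConvexOn ℝ univ Ψ) (hψconv : ConvexOn ℝ univ ψ)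
    (hΨgrad : ∀ w, HasGradientAt Ψ (Ψ' w) w) (hψgrad : ∀ w, HasGradientAt ψ (ψ' w) w)
    (LF Lf : ℝ)
    (hΨlip : ∀ a b, ‖Ψ' a - Ψ' b‖ ≤ LF * ‖a - b‖)
    (hψlip : ∀ a b, ‖ψ' a - ψ' b‖ ≤ Lf * ‖a - b‖)
    (Y : Set (EuclideanSpace ℝ (Fin m)))
    (hYcpt : IsCompact Y) (hYconv : Convex ℝ Y)
    (su sl μ : ℝ)
    (hsu : su ∈ Ioo 0 (1 / LF)) (hsl : sl ∈ Ioo 0 (1 / Lf)) (hμ : μ ∈ Ioo (0 : ℝ) 1)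
    (α : ℕ → ℝ) (hα : ∀ k, α k = 1 / ((k : ℝ) + 1))
    (βlow cβ : ℝ) (hβlow : 0 < βlow)
    (β : ℕ → ℝ) (hβ : ∀ k, β k ∈ Icc βlow 1)
    (hβdiff : ∀ k ≥ 1, |β k - β (k - 1)| ≤ cβ / ((k : ℝ) + 1) ^ 2)
    (proj : EuclideanSpace ℝ (Fin m) → EuclideanSpace ℝ (Fin m))
    (hprojY : ∀ z, proj z ∈ Y)
    (hprojnear : ∀ z, ∀ w ∈ Y, ‖z - proj z‖ ≤ ‖z - w‖)
    (y : ℕ → EuclideanSpace ℝ (Fin m)) (hy0 : y 0 ∈ Y)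
    (hyrec : ∀ k, y (k + 1) =
      proj (y k - ((μ * α k * su) • Ψ' (y k) + ((1 - μ) * β k * sl) • ψ' (y k))))
    (zu zl : ℕ → EuclideanSpace ℝ (Fin m))
    (hzu : ∀ k, zu (k + 1) = y k - (su * α k) • Ψ' (y k))
    (hzl : ∀ k, zl (k + 1) = y k - (sl * β k) • ψ' (y k))
    (D MF Mf : ℝ)
    (hD : D = Metric.diam Y)
    (hMF : MF = ⨆ w : Y, ‖Ψ' w.1‖)
    (hMf : Mf = ⨆ w : Y, ‖ψ' w.1‖) :
    ∀ k ≥ 1,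
      ‖y (k + 1) - y k‖ ^ 2 ≤ ‖y k - y (k - 1)‖ ^ 2
        + (μ / ((k : ℝ) + 1) ^ 2) * ‖y (k - 1) - zu k‖ ^ 2
        + 2 * (1 - μ) * sl * cβ * D * Mf / ((k : ℝ) + 1) ^ 2
        + 2 * μ * su * D * MF / ((k : ℝ) * ((k : ℝ) + 1))
        + ((1 - μ) * cβ ^ 2 / (βlow ^ 2 * ((k : ℝ) + 1) ^ 4)) * ‖y (k - 1) - zl k‖ ^ 2 := by
  intro k hk
  obtain ⟨j, rfl⟩ := Nat.exists_eq_add_of_le' hk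
  have hLF : 0 < LF := one_div_pos.1 (hsu.1.trans hsu.2)
  have hLf : 0 < Lf := one_div_pos.1 (hsl.1.trans hsl.2)
  have hyY : ∀ n, y n ∈ Y := fun n => n.casesOn hy0 fun n => hyrec n ▸ hprojY _
  have hyD : ‖y (j + 1) - y j‖ ≤ D := by
    rw [hD, ← dist_eq_norm]
    exact dist_le_diam_of_mem hYcpt.isBounded (hyY _) (hyY _)
  have hMFb : ‖Ψ' (y j)‖ ≤ MF := hMF ▸ hYcpt.le_ciSup_of_continuousOn
    (continuous_of_norm_sub_le_mul hΨlip).norm.continuousOn (hyY j)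
  have hMfb : ‖ψ' (y j)‖ ≤ Mf := hMf ▸ hYcpt.le_ciSup_of_continuousOn
    (continuous_of_norm_sub_le_mul hψlip).norm.continuousOn (hyY j)
  have hy : ∀ n, y (n + 1) = proj (μ • zu (n + 1) + (1 - μ) • zl (n + 1)) := by
    intro n
    rw [hyrec, hzu, hzl]
    congr 1
    module
  have hμ' : μ ∈ Icc 0 1 := Ioo_subset_Icc_self hμ
  have hstep := sq_norm_proj_convexComb_sub_le_of_nearest hYconv hprojY hprojnear hμ'
    (zu (j + 1 + 1)) (zu (j + 1)) (zl (j + 1 + 1)) (zl (j + 1))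
  rw [← hy, ← hy] at hstep
  have hU := hΨconv.sq_norm_gradientStep_sub_le_harmonic hΨgrad hΨlip hLF hsu.1.le
    (by linarith [(lt_div_iff₀ hLF).1 hsu.2]) (κ := j + 1) (by positivity) hyD hMFb
  have hV := hψconv.sq_norm_gradientStep_sub_le_of_abs_sub_le hψgrad hψlip hLf hsl.1.le
    (by linarith [(lt_div_iff₀ hLf).1 hsl.2]) ⟨hβlow.le.trans (hβ _).1, (hβ _).2⟩ hβlow (hβ j).1
    (hβdiff (j + 1) (by omega)) hyD hMfb
  simp only [Nat.add_sub_cancel] at hV ⊢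
  rw [hzu, hzu, hα, hα, hzl, hzl] at hstep
  rw [hzu, hzl, hα, sub_sub_cancel, sub_sub_cancel]
  push_cast at hstep hV ⊢
  refine hstep.trans ((add_le_add (mul_le_mul_of_nonneg_left hU hμ'.1)
    (mul_le_mul_of_nonneg_left hV (sub_nonneg.2 hμ'.2))).trans_eq ?_)
  field_simp
  ring

theorem stmt6 {m : ℕ}
    (Ψ ψ : EuclideanSpace ℝ (Fin m) → ℝ)
    (Ψ' ψ' : EuclideanSpace ℝ (Fin m) → EuclideanSpace ℝ (Fin m))
    (hΨconv : ConvexOn ℝ univ Ψ) (hψconv : ConvexOn ℝ univ ψ)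
    (hΨgrad : ∀ w, HasGradientAt Ψ (Ψ' w) w) (hψgrad : ∀ w, HasGradientAt ψ (ψ' w) w)
    (LF Lf : ℝ)
    (hΨlip : ∀ a b, ‖Ψ' a - Ψ' b‖ ≤ LF * ‖a - b‖)
    (hψlip : ∀ a b, ‖ψ' a - ψ' b‖ ≤ Lf * ‖a - b‖)
    (Y : Set (EuclideanSpace ℝ (Fin m)))
    (hYne : Y.Nonempty) (hYcpt : IsCompact Y) (hYconv : Convex ℝ Y)
    (su sl μ : ℝ)
    (hsu : su ∈ Ioo 0 (1 / LF)) (hsl : sl ∈ Ioo 0 (1 / Lf)) (hμ : μ ∈ Ioo (0 : ℝ) 1)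
    (α : ℕ → ℝ) (hα : ∀ k, α k = 1 / ((k : ℝ) + 1))
    (βlow cβ : ℝ) (hβlow : 0 < βlow) (hcβ : 0 < cβ)
    (β : ℕ → ℝ) (hβ : ∀ k, β k ∈ Icc βlow 1)
    (hβdiff : ∀ k ≥ 1, |β k - β (k - 1)| ≤ cβ / ((k : ℝ) + 1) ^ 2)
    (proj : EuclideanSpace ℝ (Fin m) → EuclideanSpace ℝ (Fin m))
    (hprojY : ∀ z, proj z ∈ Y)
    (hprojnear : ∀ z, ∀ w ∈ Y, ‖z - proj z‖ ≤ ‖z - w‖)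
    (y : ℕ → EuclideanSpace ℝ (Fin m)) (hy0 : y 0 ∈ Y)
    (hyrec : ∀ k, y (k + 1) =
      proj (y k - ((μ * α k * su) • Ψ' (y k) + ((1 - μ) * β k * sl) • ψ' (y k))))
    (zu zl : ℕ → EuclideanSpace ℝ (Fin m))
    (hzu : ∀ k, zu (k + 1) = y k - (su * α k) • Ψ' (y k))
    (hzl : ∀ k, zl (k + 1) = y k - (sl * β k) • ψ' (y k))
    (D MF Mf : ℝ)
    (hD : D = Metric.diam Y)
    (hMF : MF = ⨆ w : Y, ‖Ψ' w.1‖)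
    (hMf : Mf = ⨆ w : Y, ‖ψ' w.1‖) :
    ∀ k ≥ 1,
      ‖y (k + 1) - y k‖ ^ 2 ≤ ‖y k - y (k - 1)‖ ^ 2
        + (μ / ((k : ℝ) + 1) ^ 2) * ‖y (k - 1) - zu k‖ ^ 2
        + 2 * (1 - μ) * sl * cβ * D * Mf / ((k : ℝ) + 1) ^ 2
        + 2 * μ * su * D * MF / ((k : ℝ) * ((k : ℝ) + 1))
        + ((1 - μ) * cβ ^ 2 / (βlow ^ 2 * ((k : ℝ) + 1) ^ 4)) * ‖y (k - 1) - zl k‖ ^ 2 :=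
  stmt6_general Ψ ψ Ψ' ψ' hΨconv hψconv hΨgrad hψgrad LF Lf hΨlip hψlip Y hYcpt hYconv su sl μ hsu
    hsl hμ α hα βlow cβ hβlow β hβ hβdiff proj hprojY hprojnear y hy0 hyrec zu zl hzu hzl D MF Mf hD
    hMF hMf
end

section
/- Let n ≥ 1, let e ∈ ℝⁿ be the all-ones vector, and let X = [−100, 100]ⁿ ⊆ ℝⁿ. For each K ∈ ℕ let a_K ∈ [0, 1] and let x_K ∈ X be a global minimizer over X of the function x ↦ ‖x‖⁴ + ‖a_K x − e‖⁴ (Euclidean norm). Then no subsequence of (x_K) converges to e; in particular, (x_K) does not converge to the point e (the unique optimal upper-level solution of the underlying bilevel problem). -/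
/-!
Comparing a minimizer `x` of `φ_a(x) = ‖x‖⁴ + ‖a • x - e‖⁴` with the admissible points `0` and
`e / 2` pins it away from `e`, uniformly in `a ∈ [0, 1]`. If `x` were close to `e`, then
`φ_a(x) ≥ ‖x‖⁴ ≈ ‖e‖⁴` would beat `φ_a(e / 2) = (1/16 + (1 - a/2)⁴) ‖e‖⁴` only for `a` near `0`;
but then `‖a • x - e‖ ≈ (1 - a) ‖e‖` is large and `φ_a(x)` exceeds `φ_a(0) = ‖e‖⁴`.
Quantitatively, `‖e‖ ≤ 20 ‖x - e‖`.
-/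

open Filter Topology Set

section Approximation

variable {E : Type*} [NormedAddCommGroup E] [NormedSpace ℝ E]

/-- The approximate upper-level objective `φ_K` with accumulated step factor `a`. -/
def approxObjective (a : ℝ) (e x : E) : ℝ := ‖x‖ ^ 4 + ‖a • x - e‖ ^ 4

theorem approxObjective_zero (a : ℝ) (e : E) : approxObjective a e 0 = ‖e‖ ^ 4 := by
  simp [approxObjective]

theorem approxObjective_half_smul (a : ℝ) (e : E) :
    approxObjective a e ((2 : ℝ)⁻¹ • e) = (‖e‖ / 2) ^ 4 + ((1 - a / 2) * ‖e‖) ^ 4 := by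
  have hsplit : (a * 2⁻¹) • e - e = (a / 2 - 1) • e := by rw [sub_smul, one_smul, div_eq_mul_inv]
  have habs_pow : ∀ c : ℝ, (|c| * ‖e‖) ^ 4 = (c * ‖e‖) ^ 4 := fun c => by
    rw [mul_pow, mul_pow, pow_abs, abs_of_nonneg (by positivity)]
  rw [approxObjective, smul_smul, hsplit, norm_smul, norm_smul, Real.norm_eq_abs,
    Real.norm_eq_abs, habs_pow, habs_pow]
  ring

theorem le_twenty_mul_of_pow_four_le {N p q a d : ℝ} (hN : 0 < N) (ha : a ≤ 1)
    (hp : N - d ≤ p) (hq : (1 - a) * N - d ≤ q) (h_zero : p ^ 4 + q ^ 4 ≤ N ^ 4)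
    (h_half : p ^ 4 + q ^ 4 ≤ (N / 2) ^ 4 + ((1 - a / 2) * N) ^ 4) : N ≤ 20 * d := by
  by_contra! hd
  -- The constants work because `(19/20)⁴ - 1/16 > (9/10)⁴` and `(19/20)⁴ + (3/4)⁴ > 1`.
  have hp' : (19 / 20 * N) ^ 4 ≤ p ^ 4 := by gcongr; linarith
  have hq_nonneg : 0 ≤ q ^ 4 := by positivity
  have ha' : a < 1 / 5 := by
    by_contra! ha'
    have : ((1 - a / 2) * N) ^ 4 ≤ (9 / 10 * N) ^ 4 := by gcongr <;> nlinarith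
    nlinarith [pow_pos hN 4]
  have hq' : (3 / 4 * N) ^ 4 ≤ q ^ 4 := by gcongr; nlinarith
  nlinarith [pow_pos hN 4]

theorem norm_le_twenty_mul_norm_sub_of_approxObjective_le {a : ℝ} (ha : a ∈ Icc (0 : ℝ) 1)
    {e x : E} (h_zero : approxObjective a e x ≤ approxObjective a e 0)
    (h_half : approxObjective a e x ≤ approxObjective a e ((2 : ℝ)⁻¹ • e)) :
    ‖e‖ ≤ 20 * ‖x - e‖ := by
  rcases (norm_nonneg e).eq_or_lt with he | he
  · rw [← he]; positivity
  have hx : ‖e‖ - ‖x - e‖ ≤ ‖x‖ := by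
    linarith [norm_sub_norm_le e x, norm_sub_rev e x]
  have hax : (1 - a) * ‖e‖ - ‖x - e‖ ≤ ‖a • x - e‖ := by
    have hsplit : (1 - a) • e = a • (x - e) - (a • x - e) := by
      rw [smul_sub, sub_smul, one_smul]; abel
    have hscale : ‖a • (x - e)‖ ≤ ‖x - e‖ := by
      rw [norm_smul, Real.norm_eq_abs, abs_of_nonneg ha.1]
      exact mul_le_of_le_one_left (norm_nonneg _) ha.2
    have := norm_sub_le (a • (x - e)) (a • x - e)
    rw [← hsplit, norm_smul, Real.norm_eq_abs, abs_of_nonneg (by linarith [ha.2])] at this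
    linarith
  rw [approxObjective_zero] at h_zero
  rw [approxObjective_half_smul] at h_half
  exact le_twenty_mul_of_pow_four_le he ha.2 hx hax h_zero h_half

end Approximation

theorem stmt13_general {n : ℕ} (hn : 1 ≤ n)
    (e : EuclideanSpace ℝ (Fin n)) (he : ∀ i, e i = 1)
    (X : Set (EuclideanSpace ℝ (Fin n)))
    (hX : X = {x : EuclideanSpace ℝ (Fin n) | ∀ i, x i ∈ Icc (-100 : ℝ) 100})
    (a : ℕ → ℝ) (ha : ∀ K, a K ∈ Icc (0 : ℝ) 1)
    (xK : ℕ → EuclideanSpace ℝ (Fin n))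
    (hxmin : ∀ K, ∀ x ∈ X,
      ‖xK K‖ ^ 4 + ‖a K • xK K - e‖ ^ 4 ≤ ‖x‖ ^ 4 + ‖a K • x - e‖ ^ 4) :
    (∀ ι : ℕ → ℕ, StrictMono ι → ¬ Tendsto (fun K => xK (ι K)) atTop (𝓝 e)) ∧
    ¬ Tendsto xK atTop (𝓝 e) := by
  have he_pos : 0 < ‖e‖ / 20 := by
    have : e ≠ 0 := fun h => by simpa [h] using he ⟨0, hn⟩
    positivity
  have h_far : ∀ K, ‖e‖ / 20 ≤ dist (xK K) e := fun K => by
    rw [dist_eq_norm, div_le_iff₀' (by norm_num)]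
    refine norm_le_twenty_mul_norm_sub_of_approxObjective_le (ha K) (hxmin K 0 ?_)
      (hxmin K _ ?_) <;> norm_num [hX, he]
  have h_sub : ∀ ι : ℕ → ℕ, ¬ Tendsto (fun K => xK (ι K)) atTop (𝓝 e) := fun ι hconv => by
    obtain ⟨K, hK⟩ := (hconv.eventually_mem (Metric.ball_mem_nhds e he_pos)).exists
    exact (h_far (ι K)).not_gt hK
  exact ⟨fun ι _ => h_sub ι, h_sub id⟩

theorem stmt13 {n : ℕ} (hn : 1 ≤ n)
    (e : EuclideanSpace ℝ (Fin n)) (he : ∀ i, e i = 1)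
    (X : Set (EuclideanSpace ℝ (Fin n)))
    (hX : X = {x : EuclideanSpace ℝ (Fin n) | ∀ i, x i ∈ Icc (-100 : ℝ) 100})
    (a : ℕ → ℝ) (ha : ∀ K, a K ∈ Icc (0 : ℝ) 1)
    (xK : ℕ → EuclideanSpace ℝ (Fin n)) (hxX : ∀ K, xK K ∈ X)
    (hxmin : ∀ K, ∀ x ∈ X,
      ‖xK K‖ ^ 4 + ‖a K • xK K - e‖ ^ 4 ≤ ‖x‖ ^ 4 + ‖a K • x - e‖ ^ 4) :
    (∀ ι : ℕ → ℕ, StrictMono ι → ¬ Tendsto (fun K => xK (ι K)) atTop (𝓝 e)) ∧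
    ¬ Tendsto xK atTop (𝓝 e) :=
  stmt13_general hn e he X hX a ha xK hxmin
end

section
/- For every a ∈ [0, 1], the function x ↦ (1/2)x² + (1/2)(a x − 1)² has a unique minimizer over [−100, 100], namely x*(a) = a/(1 + a²), and x*(a) ≤ 1/2. Consequently, for any sequence (a_K) ⊆ [0,1], the sequence of minimizers x*(a_K) does not converge to 1. -/
open Filter Topology Set

lemma min_half : ∀ a ∈ Icc (0:ℝ) 1, a / (1 + a ^ 2) ≤ 1 / 2 := by
  intro a ha
  have hc : (0:ℝ) < 1 + a ^ 2 := by positivity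
  rw [div_le_iff₀ hc]
  nlinarith [sq_nonneg (a - 1)]

theorem stmt14 :
    (∀ a ∈ Icc (0 : ℝ) 1,
      a / (1 + a ^ 2) ∈ Icc (-100 : ℝ) 100 ∧
      (∀ x ∈ Icc (-100 : ℝ) 100,
        (1 / 2) * (a / (1 + a ^ 2)) ^ 2 + (1 / 2) * (a * (a / (1 + a ^ 2)) - 1) ^ 2 ≤
          (1 / 2) * x ^ 2 + (1 / 2) * (a * x - 1) ^ 2) ∧
      (∀ x ∈ Icc (-100 : ℝ) 100,
        (∀ x' ∈ Icc (-100 : ℝ) 100,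
          (1 / 2) * x ^ 2 + (1 / 2) * (a * x - 1) ^ 2 ≤
            (1 / 2) * x' ^ 2 + (1 / 2) * (a * x' - 1) ^ 2) →
        x = a / (1 + a ^ 2)) ∧
      a / (1 + a ^ 2) ≤ 1 / 2) ∧
    (∀ aK : ℕ → ℝ, (∀ K, aK K ∈ Icc (0 : ℝ) 1) →
      ¬ Tendsto (fun K => aK K / (1 + aK K ^ 2)) atTop (𝓝 1)) := by
  constructor
  · intro a ha
    obtain ⟨ha0, ha1⟩ := ha
    have hc : (0:ℝ) < 1 + a ^ 2 := by positivity
    have hb := min_half a ⟨ha0, ha1⟩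
    have hnn : 0 ≤ a / (1 + a ^ 2) := div_nonneg ha0 hc.le
    have hid : ∀ x : ℝ,
        (1 / 2) * x ^ 2 + (1 / 2) * (a * x - 1) ^ 2 -
          ((1 / 2) * (a / (1 + a ^ 2)) ^ 2 + (1 / 2) * (a * (a / (1 + a ^ 2)) - 1) ^ 2) =
        (1 / 2) * (1 + a ^ 2) * (x - a / (1 + a ^ 2)) ^ 2 := by
      intro x
      field_simp
      ring
    have hmem : a / (1 + a ^ 2) ∈ Icc (-100:ℝ) 100 := ⟨by linarith, by linarith⟩
    refine ⟨hmem, ?_, ?_, hb⟩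
    · intro x hx
      have h1 := hid x
      nlinarith [mul_nonneg (mul_nonneg (by norm_num : (0:ℝ) ≤ 1/2) hc.le)
        (sq_nonneg (x - a / (1 + a ^ 2)))]
    · intro x hx hmin
      have h1 := hmin _ hmem
      have h2 := hid x
      have h3 : (1 / 2) * (1 + a ^ 2) * (x - a / (1 + a ^ 2)) ^ 2 ≤ 0 := by linarith
      have h4 : (x - a / (1 + a ^ 2)) ^ 2 ≤ 0 := by nlinarith [sq_nonneg (x - a / (1 + a ^ 2))]
      have h5 : (x - a / (1 + a ^ 2)) ^ 2 = 0 :=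
        le_antisymm h4 (sq_nonneg _)
      have := pow_eq_zero_iff (n := 2) (by norm_num) |>.mp h5
      linarith [this, sub_eq_zero.mp this]
  · intro aK haK h
    have hev : ∀ᶠ K in atTop, (1:ℝ)/2 < aK K / (1 + aK K ^ 2) :=
      h.eventually (eventually_gt_nhds (by norm_num : (1:ℝ)/2 < 1))
    obtain ⟨K, hK⟩ := hev.exists
    exact absurd (min_half (aK K) (haK K)) (not_le.mpr hK)
end

section
/- Fix ε > 0. (i) For every x ∈ ℝ, the function (y₁, y₂) ↦ (1/2)y₁² + (ε/2)y₂² − x·y₁ on ℝ² has the unique global minimizer (y₁, y₂) = (x, 0). (ii) Substituting this minimizer into the upper-level objective, the function x ↦ (1/2)(x − 0)² + (1/2)(x − 1)² has the unique minimizer x = 1/2 over [−100, 100]. Hence, for every ε > 0, the bilevel problem min_{x ∈ [−100,100]} (1/2)|x − y₂|² + (1/2)|y₁ − 1|² s.t. (y₁,y₂) ∈ argmin_{ℝ²} (1/2)y₁² + (ε/2)y₂² − x y₁ has the unique solution x*(ε) = 1/2, y₁*(ε) = 1/2, y₂*(ε) = 0; in particular (x*(ε), y₁*(ε), y₂*(ε))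 does not tend to the true solution (1, 1, 1) of the unregularized problem as ε → 0. -/
open Filter Topology Set

/-- Lower-level objective of the regularized bilevel problem. -/
noncomputable def lowObj (ε x : ℝ) (y : ℝ × ℝ) : ℝ := (1 / 2) * y.1 ^ 2 + (ε / 2) * y.2 ^ 2 - x * y.1

/-- Upper-level objective of the bilevel problem. -/
noncomputable def upObj (x : ℝ) (y : ℝ × ℝ) : ℝ := (1 / 2) * (x - y.2) ^ 2 + (1 / 2) * (y.1 - 1) ^ 2


lemma low_min (ε : ℝ) (hε : 0 < ε) (x : ℝ) (y : ℝ × ℝ) :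
    lowObj ε x (x, 0) ≤ lowObj ε x y := by
  have h1 : (0:ℝ) ≤ (1/2) * (y.1 - x)^2 := by positivity
  have h2 : (0:ℝ) ≤ (ε/2) * y.2^2 := by positivity
  simp only [lowObj]
  nlinarith

lemma low_uniq (ε : ℝ) (hε : 0 < ε) (x : ℝ) (y : ℝ × ℝ)
    (h : ∀ y' : ℝ × ℝ, lowObj ε x y ≤ lowObj ε x y') : y = (x, 0) := by
  have h1 := h (x, 0)
  simp only [lowObj] at h1
  have hy1 : y.1 = x := by nlinarith [sq_nonneg (y.1 - x), sq_nonneg y.2]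
  have hy2 : y.2 = 0 := by
    have h0 : y.2 ^ 2 ≤ 0 := by nlinarith [sq_nonneg (y.1 - x)]
    have := le_antisymm h0 (sq_nonneg y.2)
    exact pow_eq_zero_iff (by norm_num) |>.mp this
  exact Prod.ext hy1 hy2

theorem stmt15 (ε : ℝ) (hε : 0 < ε) :
    -- (i) unique global minimizer of the lower-level problem is (x, 0)
    (∀ x : ℝ,
      (∀ y : ℝ × ℝ, lowObj ε x (x, 0) ≤ lowObj ε x y) ∧
      (∀ y : ℝ × ℝ, (∀ y' : ℝ × ℝ, lowObj ε x y ≤ lowObj ε x y') → y = (x, 0))) ∧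
    -- (ii) substituting the minimizer, x ↦ (1/2)(x-0)² + (1/2)(x-1)² has unique minimizer 1/2
    ((1 : ℝ) / 2 ∈ Icc (-100 : ℝ) 100 ∧
      (∀ x ∈ Icc (-100 : ℝ) 100,
        (1 / 2) * ((1 : ℝ) / 2 - 0) ^ 2 + (1 / 2) * ((1 : ℝ) / 2 - 1) ^ 2 ≤
          (1 / 2) * (x - 0) ^ 2 + (1 / 2) * (x - 1) ^ 2) ∧
      (∀ x ∈ Icc (-100 : ℝ) 100,
        (∀ x' ∈ Icc (-100 : ℝ) 100,
          (1 / 2) * (x - 0) ^ 2 + (1 / 2) * (x - 1) ^ 2 ≤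
            (1 / 2) * (x' - 0) ^ 2 + (1 / 2) * (x' - 1) ^ 2) →
        x = 1 / 2)) ∧
    -- hence: the bilevel problem has the unique solution (1/2, (1/2, 0))
    (((1 : ℝ) / 2 ∈ Icc (-100 : ℝ) 100 ∧
        (∀ y' : ℝ × ℝ, lowObj ε (1 / 2) ((1 : ℝ) / 2, (0 : ℝ)) ≤ lowObj ε (1 / 2) y')) ∧
      (∀ x ∈ Icc (-100 : ℝ) 100, ∀ y : ℝ × ℝ,
        (∀ y' : ℝ × ℝ, lowObj ε x y ≤ lowObj ε x y') →
        upObj (1 / 2) ((1 : ℝ) / 2, (0 : ℝ)) ≤ upObj x y) ∧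
      (∀ x ∈ Icc (-100 : ℝ) 100, ∀ y : ℝ × ℝ,
        (∀ y' : ℝ × ℝ, lowObj ε x y ≤ lowObj ε x y') →
        (∀ x' ∈ Icc (-100 : ℝ) 100, ∀ y' : ℝ × ℝ,
          (∀ y'' : ℝ × ℝ, lowObj ε x' y' ≤ lowObj ε x' y'') → upObj x y ≤ upObj x' y') →
        (x, y) = ((1 : ℝ) / 2, ((1 : ℝ) / 2, (0 : ℝ))))) ∧
    -- in particular, the solution does not tend to the true solution (1, 1, 1) as ε → 0
    ¬ Tendsto (fun _ : ℝ => ((1 : ℝ) / 2, ((1 : ℝ) / 2, (0 : ℝ)))) (𝓝[>] (0 : ℝ))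
        (𝓝 ((1 : ℝ), ((1 : ℝ), (1 : ℝ)))) := by
  constructor
  · intro x
    exact ⟨low_min ε hε x, fun y h => low_uniq ε hε x y h⟩
  refine ⟨⟨by norm_num, fun x _ => by nlinarith [sq_nonneg (x - 1/2)],
    fun x _ h => ?_⟩, ⟨⟨by norm_num, low_min ε hε (1/2)⟩, ?_, ?_⟩, ?_⟩
  · have := h (1/2) (by norm_num)
    nlinarith [sq_nonneg (x - 1/2)]
  · intro x _ y hy
    have := low_uniq ε hε x y hy
    subst this
    simp only [upObj]
    nlinarith [sq_nonneg (x - 1/2)]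
  · intro x hx y hy hmin
    have hyx := low_uniq ε hε x y hy
    subst hyx
    have := hmin (1/2) (by norm_num) (1/2, 0) (low_min ε hε (1/2))
    simp only [upObj] at this
    have hx12 : x = 1/2 := by nlinarith [sq_nonneg (x - 1/2)]
    subst hx12; rfl
  · intro h
    have : ((1:ℝ)/2, ((1:ℝ)/2, (0:ℝ))) = ((1:ℝ), ((1:ℝ), (1:ℝ))) :=
      tendsto_nhds_unique tendsto_const_nhds h
    simp at this
end

section
/- Let X ⊆ ℝⁿ be compact, and let F, f : ℝⁿ × ℝᵐ → ℝ be twice continuously differentiable with: for every x, F(x,·) convex, L_F-smooth and bounded below, and f(x,·) σ-strongly convex (σ > 0) and L_f-smooth; assume f is level-bounded in y uniformly in x ∈ X (for every r ∈ ℝ the set { y : ∃ x ∈ X, f(x,y) ≤ r } is bounded). Let y*(x) denote the unique minimizer of f(x,·), and define y_{k+1}(x) = y_k(x) − s( α_k μ ∇_y F(x, y_k(x)) + β_k (1−μ) ∇_y f(x, y_k(x)) ), y₀(x) = y₀, with s ∈ (0, 1/max(L_F, L_f)), μ ∈ (0,1), positive nonincreasing α_k → 0, and nonincreasing β_k ∈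 [β̲, 1] (β̲ > 0) with |β_k − β_{k−1}| ≤ c_β/(k+1)². Then sup_{x∈X} ‖y_k(x) − y*(x)‖ → 0 as k → ∞. -/
open Filter Topology Set Metric

open scoped RealInnerProductSpace

/-! For fixed `x`, the iteration is a gradient step on `f x` with step size
`tₖ = βₖ (1 - μ) s ∈ [β̲ (1 - μ) s, 1 / L]`, where `L = max L_F L_f`, perturbed by
`aₖ ∇_y F(x, yₖ)` with `aₖ = αₖ μ s`.
Strong monotonicity and co-coercivity of `∇_y f(x, ·)` make the unperturbed step a contraction
towards `y*(x)` with the factor `ρ = √(1 - β̲ (1 - μ) s σ) < 1`, independent of `x` and `k`.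
Level-boundedness confines `y*(X)` to a ball, on which `∇_y F` is bounded by compactness, so the
perturbation is at most `aₖ (C + L ‖yₖ - y*(x)‖)`. The errors `eₖ = ‖yₖ(x) - y*(x)‖` satisfy
`eₖ₊₁ ≤ (ρ + aₖ L) eₖ + aₖ C` with `aₖ → 0`, which forces `eₖ → 0` uniformly on `X`. -/

theorem ConvexOn.add_le_of_hasFDerivAt {E : Type*} [NormedAddCommGroup E] [NormedSpace ℝ E]
    {g : E → ℝ} {g' : E →L[ℝ] ℝ} (hg : ConvexOn ℝ univ g) {u : E} (hg' : HasFDerivAt g g' u)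
    (v : E) : g u + g' (v - u) ≤ g v := by
  have hline : ConvexOn ℝ univ (g ∘ AffineMap.lineMap (k := ℝ) u v) := by
    simpa using hg.comp_affineMap (AffineMap.lineMap u v : ℝ →ᵃ[ℝ] E)
  have hderiv : HasDerivAt (g ∘ AffineMap.lineMap (k := ℝ) u v) (g' (v - u)) 0 := by
    simpa using hg'.comp_hasDerivAt_of_eq 0 AffineMap.hasDerivAt_lineMap (by simp)
  have := hline.le_slope_of_hasDerivAt (mem_univ 0) (mem_univ 1) one_pos hderiv
  simp only [slope_def_field, Function.comp_apply, AffineMap.lineMap_apply_one,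
    AffineMap.lineMap_apply_zero, sub_zero, div_one] at this
  linarith

section Gradient

variable {E : Type*} [NormedAddCommGroup E] [InnerProductSpace ℝ E] [CompleteSpace E]
  {g : E → ℝ} {σ L : ℝ}

theorem StrongConvexOn.add_inner_gradient_add_sq_norm_le (hg : StrongConvexOn univ σ g) {u : E}
    (hu : DifferentiableAt ℝ g u) (v : E) :
    g u + ⟪gradient g u, v - u⟫ + σ / 2 * ‖v - u‖ ^ 2 ≤ g v := by
  have hderiv := hu.hasFDerivAt.sub ((hasStrictFDerivAt_norm_sq u).hasFDerivAt.const_mul (σ / 2))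
  have := (strongConvexOn_iff_convex.1 hg).add_le_of_hasFDerivAt hderiv v
  have hu_inner : ⟪u, v - u⟫ = ⟪v, u⟫ - ‖u‖ ^ 2 := by
    rw [inner_sub_right, real_inner_comm, real_inner_self_eq_norm_sq]
  simp only [sub_apply, smul_apply, innerSL_apply_apply, ← inner_gradient_left, smul_eq_mul,
    nsmul_eq_mul, hu_inner, Nat.cast_ofNat] at this
  rw [norm_sub_sq_real]
  linear_combination this

theorem StrongConvexOn.mul_sq_norm_le_inner_gradient_sub (hg : StrongConvexOn univ σ g)
    (hgd : Differentiable ℝ g) (u v : E) :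
    σ * ‖u - v‖ ^ 2 ≤ ⟪gradient g u - gradient g v, u - v⟫ := by
  have huv := hg.add_inner_gradient_add_sq_norm_le (hgd u) v
  have hvu := hg.add_inner_gradient_add_sq_norm_le (hgd v) u
  rw [norm_sub_rev] at huv
  rw [inner_sub_left, ← neg_sub u v, inner_neg_right] at *
  linarith

theorem le_add_inner_gradient_add_sq_norm (hgd : Differentiable ℝ g)
    (hlip : ∀ a b, ‖gradient g a - gradient g b‖ ≤ L * ‖a - b‖) (u v : E) :
    g v ≤ g u + ⟪gradient g u, v - u⟫ + L / 2 * ‖v - u‖ ^ 2 := by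
  set d := v - u
  let ψ : ℝ → ℝ := fun t ↦ g (u + t • d) - t * ⟪gradient g u, d⟫ - L / 2 * t ^ 2 * ‖d‖ ^ 2
  have hψ (t : ℝ) :
      HasDerivAt ψ (⟪gradient g (u + t • d) - gradient g u, d⟫ - L * t * ‖d‖ ^ 2) t := by
    have hline : HasDerivAt (fun t : ℝ ↦ u + t • d) d t := by
      simpa using ((hasDerivAt_id t).smul_const d).const_add u
    have := (((hgd _).hasFDerivAt.comp_hasDerivAt t hline).sub
      ((hasDerivAt_id t).mul_const ⟪gradient g u, d⟫)).sub
      (((hasDerivAt_pow 2 t).const_mul (L / 2)).mul_const (‖d‖ ^ 2))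
    refine (this : HasDerivAt ψ _ t).congr_deriv ?_
    simp only [inner_sub_left, inner_gradient_left, Nat.cast_ofNat]
    ring
  have hψ_nonpos : ∀ t ∈ interior (Ici (0 : ℝ)),
      ⟪gradient g (u + t • d) - gradient g u, d⟫ - L * t * ‖d‖ ^ 2 ≤ 0 := by
    intro t ht
    rw [interior_Ici, mem_Ioi] at ht
    have := hlip (u + t • d) u
    rw [add_sub_cancel_left, norm_smul, Real.norm_of_nonneg ht.le] at this
    nlinarith [real_inner_le_norm (gradient g (u + t • d) - gradient g u) d, norm_nonneg d]
  have hanti : AntitoneOn ψ (Ici 0) :=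
    antitoneOn_of_hasDerivWithinAt_nonpos (convex_Ici 0)
      (fun t _ ↦ (hψ t).continuousAt.continuousWithinAt) (fun t _ ↦ (hψ t).hasDerivWithinAt)
      hψ_nonpos
  have := hanti (mem_Ici.2 le_rfl) (mem_Ici.2 zero_le_one) zero_le_one
  simp only [ψ, d, one_smul, zero_smul, add_zero, add_sub_cancel, one_mul, zero_mul, sub_zero,
    one_pow, mul_one, zero_pow two_ne_zero, mul_zero] at this
  linarith

/-- Compare the first-order lower bound at `p` with the descent-lemma upper bound at the
gradient step `q - L⁻¹ (∇g q - ∇g p)`. -/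
theorem ConvexOn.add_inner_gradient_add_sq_norm_gradient_sub_le (hg : ConvexOn ℝ univ g)
    (hgd : Differentiable ℝ g) (hL : 0 < L)
    (hlip : ∀ a b, ‖gradient g a - gradient g b‖ ≤ L * ‖a - b‖) (p q : E) :
    g p + ⟪gradient g p, q - p⟫ + ‖gradient g q - gradient g p‖ ^ 2 / (2 * L) ≤ g q := by
  set G := gradient g q - gradient g p
  set z := q - L⁻¹ • G
  have hlower := (strongConvexOn_zero.2 hg).add_inner_gradient_add_sq_norm_le (hgd p) z
  have hupper := le_add_inner_gradient_add_sq_norm hgd hlip q z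
  have hzp : z - p = (q - p) - L⁻¹ • G := by simp only [z]; abel
  have hzq : z - q = -(L⁻¹ • G) := by simp [z]
  rw [hzp, inner_sub_right, real_inner_smul_right] at hlower
  rw [hzq, inner_neg_right, real_inner_smul_right, norm_neg, norm_smul,
    Real.norm_of_nonneg (inv_nonneg.2 hL.le)] at hupper
  have hG : ⟪gradient g q, G⟫ - ⟪gradient g p, G⟫ = ‖G‖ ^ 2 := by
    rw [← inner_sub_left, real_inner_self_eq_norm_sq]
  field_simp at hlower hupper ⊢
  nlinarith

theorem ConvexOn.sq_norm_gradient_sub_le_inner_s17 (hg : ConvexOn ℝ univ g) (hgd : Differentiable ℝ g)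
    (hL : 0 < L) (hlip : ∀ a b, ‖gradient g a - gradient g b‖ ≤ L * ‖a - b‖) (u v : E) :
    ‖gradient g u - gradient g v‖ ^ 2 ≤ L * ⟪gradient g u - gradient g v, u - v⟫ := by
  have huv := hg.add_inner_gradient_add_sq_norm_gradient_sub_le hgd hL hlip u v
  have hvu := hg.add_inner_gradient_add_sq_norm_gradient_sub_le hgd hL hlip v u
  rw [norm_sub_rev] at huv
  rw [inner_sub_left, ← neg_sub u v, inner_neg_right] at *
  field_simp at huv hvu ⊢
  nlinarith

theorem StrongConvexOn.sq_norm_sub_smul_gradient_sub_le (hg : StrongConvexOn univ σ g)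
    (hσ : 0 ≤ σ) (hgd : Differentiable ℝ g) (hL : 0 < L)
    (hlip : ∀ a b, ‖gradient g a - gradient g b‖ ≤ L * ‖a - b‖) {t : ℝ} (ht : 0 ≤ t)
    (htL : t * L ≤ 1) (u v : E) :
    ‖(u - v) - t • (gradient g u - gradient g v)‖ ^ 2 ≤ (1 - t * σ) * ‖u - v‖ ^ 2 := by
  have hcoco := (strongConvexOn_zero.1 (hg.mono hσ)).sq_norm_gradient_sub_le_inner_s17 hgd hL hlip u v
  have hmono := hg.mul_sq_norm_le_inner_gradient_sub hgd u v
  have hinner : 0 ≤ ⟪gradient g u - gradient g v, u - v⟫ :=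
    (by positivity : 0 ≤ σ * ‖u - v‖ ^ 2).trans hmono
  have hquad : t ^ 2 * ‖gradient g u - gradient g v‖ ^ 2 ≤
      t * ⟪gradient g u - gradient g v, u - v⟫ :=
    calc t ^ 2 * ‖gradient g u - gradient g v‖ ^ 2
        ≤ t ^ 2 * (L * ⟪gradient g u - gradient g v, u - v⟫) := by gcongr
      _ = t * (t * L) * ⟪gradient g u - gradient g v, u - v⟫ := by ring
      _ ≤ t * 1 * ⟪gradient g u - gradient g v, u - v⟫ := by gcongr
      _ = t * ⟪gradient g u - gradient g v, u - v⟫ := by ring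
  rw [norm_sub_sq_real, norm_smul, Real.norm_of_nonneg ht, inner_smul_right, real_inner_comm]
  nlinarith [mul_le_mul_of_nonneg_left hmono ht]

theorem StrongConvexOn.norm_sub_smul_gradient_sub_le (hg : StrongConvexOn univ σ g)
    (hσ : 0 ≤ σ) (hgd : Differentiable ℝ g) (hL : 0 < L)
    (hlip : ∀ a b, ‖gradient g a - gradient g b‖ ≤ L * ‖a - b‖) {v : E} (hv : gradient g v = 0)
    {t₀ t : ℝ} (ht₀ : 0 ≤ t₀) (ht : t₀ ≤ t) (htL : t * L ≤ 1) (u : E) :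
    ‖u - t • gradient g u - v‖ ≤ √(1 - t₀ * σ) * ‖u - v‖ := by
  have hsq := hg.sq_norm_sub_smul_gradient_sub_le hσ hgd hL hlip (ht₀.trans ht) htL u v
  rw [hv, sub_zero, sub_right_comm] at hsq
  calc ‖u - t • gradient g u - v‖ = √(‖u - t • gradient g u - v‖ ^ 2) :=
        (Real.sqrt_sq (norm_nonneg _)).symm
    _ ≤ √((1 - t₀ * σ) * ‖u - v‖ ^ 2) := Real.sqrt_le_sqrt (hsq.trans (by gcongr))
    _ = √(1 - t₀ * σ) * ‖u - v‖ := by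
        rw [Real.sqrt_mul' _ (by positivity), Real.sqrt_sq (norm_nonneg _)]

theorem StrongConvexOn.norm_sub_smul_add_smul_gradient_sub_le (hg : StrongConvexOn univ σ g)
    (hσ : 0 ≤ σ) (hgd : Differentiable ℝ g) (hL : 0 < L)
    (hlip : ∀ a b, ‖gradient g a - gradient g b‖ ≤ L * ‖a - b‖) {v : E} (hv : gradient g v = 0)
    {t₀ t a K C : ℝ} (ht₀ : 0 ≤ t₀) (ht : t₀ ≤ t) (htL : t * L ≤ 1) (ha : 0 ≤ a) {u w : E}
    (hw : ‖w‖ ≤ C + K * ‖u - v‖) :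
    ‖u - (a • w + t • gradient g u) - v‖ ≤ (√(1 - t₀ * σ) + a * K) * ‖u - v‖ + a * C :=
  calc ‖u - (a • w + t • gradient g u) - v‖ = ‖(u - t • gradient g u - v) - a • w‖ := by
        congr 1; abel
    _ ≤ ‖u - t • gradient g u - v‖ + a * ‖w‖ :=
        (norm_sub_le _ _).trans_eq (by rw [norm_smul, Real.norm_of_nonneg ha])
    _ ≤ √(1 - t₀ * σ) * ‖u - v‖ + a * (C + K * ‖u - v‖) := by
        gcongr; exact hg.norm_sub_smul_gradient_sub_le hσ hgd hL hlip hv ht₀ ht htL u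
    _ = (√(1 - t₀ * σ) + a * K) * ‖u - v‖ + a * C := by ring

theorem IsLocalMin.gradient_eq_zero {v : E} (h : IsLocalMin g v) : gradient g v = 0 := by
  simp [gradient, h.fderiv_eq_zero]

end Gradient

section Parametric

variable {E₁ E₂ : Type*} [NormedAddCommGroup E₁] [NormedSpace ℝ E₁]
  [NormedAddCommGroup E₂] [InnerProductSpace ℝ E₂] [CompleteSpace E₂]

theorem ContDiff.continuous_gradient_snd {F : E₁ → E₂ → ℝ}
    (hF : ContDiff ℝ 1 (fun p : E₁ × E₂ ↦ F p.1 p.2)) :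
    Continuous (fun p : E₁ × E₂ ↦ gradient (F p.1) p.2) := by
  have hgrad : ∀ p : E₁ × E₂, (InnerProductSpace.toDual ℝ E₂).symm
      ((fderiv ℝ (fun p : E₁ × E₂ ↦ F p.1 p.2) p).comp (ContinuousLinearMap.inr ℝ E₁ E₂))
      = gradient (F p.1) p.2 := by
    rintro ⟨x, w⟩
    exact (((hF.differentiable one_ne_zero (x, w)).hasFDerivAt.comp w
      (hasFDerivAt_prodMk_right x w)).hasGradientAt.gradient).symm
  exact ((InnerProductSpace.toDual ℝ E₂).symm.continuous.comp
    ((hF.continuous_fderiv one_ne_zero).clm_comp continuous_const)).congr hgrad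

theorem IsCompact.exists_norm_gradient_le [ProperSpace E₂] {X : Set E₁} (hX : IsCompact X)
    {F : E₁ → E₂ → ℝ} (hF : ContDiff ℝ 1 (fun p : E₁ × E₂ ↦ F p.1 p.2)) {L : ℝ}
    (hlip : ∀ x a b, ‖gradient (F x) a - gradient (F x) b‖ ≤ L * ‖a - b‖) {φ : E₁ → E₂}
    (hφ : Bornology.IsBounded (φ '' X)) :
    ∃ C, 0 ≤ C ∧ ∀ x ∈ X, ∀ u, ‖gradient (F x) u‖ ≤ C + L * ‖u - φ x‖ := by
  obtain ⟨C, hC0, hC⟩ := ((hX.prod hφ.isCompact_closure).image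
    hF.continuous_gradient_snd).isBounded.subset_closedBall_lt 0 0
  refine ⟨C, hC0.le, fun x hx u ↦ ?_⟩
  have hCx : ‖gradient (F x) (φ x)‖ ≤ C := by
    simpa using hC ⟨(x, φ x), ⟨hx, subset_closure ⟨x, hx, rfl⟩⟩, rfl⟩
  calc ‖gradient (F x) u‖
      ≤ ‖gradient (F x) (φ x)‖ + ‖gradient (F x) u - gradient (F x) (φ x)‖ :=
        norm_le_norm_add_norm_sub' _ _
    _ ≤ C + L * ‖u - φ x‖ := add_le_add hCx (hlip x u (φ x))

end Parametric

theorem IsCompact.isBounded_image_of_le {α β : Type*} [TopologicalSpace α] [Bornology β]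
    {X : Set α} (hX : IsCompact X) {f : α → β → ℝ} {y₀ : β}
    (hf : ContinuousOn (fun x ↦ f x y₀) X)
    (hlevel : ∀ r : ℝ, Bornology.IsBounded {w | ∃ x ∈ X, f x w ≤ r}) {φ : α → β}
    (hφ : ∀ x ∈ X, f x (φ x) ≤ f x y₀) : Bornology.IsBounded (φ '' X) := by
  obtain ⟨r, hr⟩ := hX.bddAbove_image hf
  refine (hlevel r).subset ?_
  rintro _ ⟨x, hx, rfl⟩
  exact ⟨x, hx, (hφ x hx).trans (hr ⟨x, hx, rfl⟩)⟩

theorem tendsto_zero_of_le_mul_add {b c : ℕ → ℝ} {ρ : ℝ} (hb : ∀ k, 0 ≤ b k) (hρ0 : 0 ≤ ρ)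
    (hρ : ρ < 1) (hc : Tendsto c atTop (𝓝 0))
    (hbc : ∀ᶠ k in atTop, b (k + 1) ≤ ρ * b k + c k) : Tendsto b atTop (𝓝 0) := by
  refine tendsto_order.2 ⟨fun a ha ↦ .of_forall fun k ↦ ha.trans_le (hb k), fun ε hε ↦ ?_⟩
  obtain ⟨N, hN⟩ := eventually_atTop.1 <|
    hbc.and (hc.eventually (eventually_le_nhds (by positivity : 0 < (1 - ρ) * (ε / 2))))
  have hiter : ∀ j, b (N + j) ≤ ρ ^ j * b N + ε / 2 := by
    intro j
    induction j with
    | zero => simp; positivity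
    | succ j ih =>
      obtain ⟨hrec, hcN⟩ := hN (N + j) (Nat.le_add_right N j)
      calc b (N + (j + 1)) ≤ ρ * b (N + j) + c (N + j) := hrec
        _ ≤ ρ * (ρ ^ j * b N + ε / 2) + (1 - ρ) * (ε / 2) := by gcongr
        _ = ρ ^ (j + 1) * b N + ε / 2 := by ring
  have hpow : Tendsto (fun j ↦ ρ ^ j * b N) atTop (𝓝 0) := by
    simpa using (tendsto_pow_atTop_nhds_zero_of_lt_one hρ0 hρ).mul_const (b N)
  obtain ⟨J, hJ⟩ := eventually_atTop.1 (hpow.eventually (eventually_lt_nhds (half_pos hε)))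
  refine eventually_atTop.2 ⟨N + J, fun k hk ↦ ?_⟩
  obtain ⟨j, rfl⟩ := Nat.exists_eq_add_of_le (le_of_add_le_left hk)
  linarith [hiter j, hJ j (by omega)]

theorem eventually_forall_le_of_le_mul_add {ι : Type*} {e : ι → ℕ → ℝ} {a : ℕ → ℝ} {ρ K B C : ℝ}
    (hρ0 : 0 ≤ ρ) (hρ : ρ < 1) (ha0 : ∀ k, 0 ≤ a k) (ha : Tendsto a atTop (𝓝 0)) (hK : 0 ≤ K)
    (hB : 0 ≤ B) (hC : 0 ≤ C) (he0 : ∀ i, e i 0 ≤ B)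
    (he : ∀ k i, e i (k + 1) ≤ (ρ + a k * K) * e i k + a k * C) :
    ∀ ε > 0, ∀ᶠ k in atTop, ∀ i, e i k ≤ ε := by
  let b : ℕ → ℝ := fun k ↦ Nat.rec B (fun k bk ↦ (ρ + a k * K) * bk + a k * C) k
  have hb_succ (k : ℕ) : b (k + 1) = (ρ + a k * K) * b k + a k * C := rfl
  have hr0 (k : ℕ) : 0 ≤ ρ + a k * K := by have := ha0 k; positivity
  have hb0 (k : ℕ) : 0 ≤ b k := by
    induction k with
    | zero => exact hB
    | succ k ih => rw [hb_succ]; have := ha0 k; have := hr0 k; positivity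
  have heb (k : ℕ) (i : ι) : e i k ≤ b k := by
    induction k with
    | zero => exact he0 i
    | succ k ih => rw [hb_succ]; exact (he k i).trans (by gcongr; exact hr0 k)
  -- once `a k * K ≤ (1 - ρ) / 2`, the majorant contracts with the factor `(1 + ρ) / 2 < 1`
  have hsmall : ∀ᶠ k in atTop, a k * K ≤ (1 - ρ) / 2 := by
    have : Tendsto (fun k ↦ a k * K) atTop (𝓝 0) := by simpa using ha.mul_const K
    exact this.eventually (eventually_le_nhds (by linarith))
  have hb : Tendsto b atTop (𝓝 0) := by
    refine tendsto_zero_of_le_mul_add (ρ := (1 + ρ) / 2) (c := fun k ↦ a k * C) hb0 (by linarith)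
      (by linarith)
      (by simpa using ha.mul_const C) (hsmall.mono fun k hk ↦ ?_)
    rw [hb_succ]
    have := hb0 k
    gcongr
    linarith
  exact fun ε hε ↦ (hb.eventually (eventually_le_nhds hε)).mono fun k hk i ↦ (heb k i).trans hk

theorem stmt17_general {n m : ℕ}
    (X : Set (EuclideanSpace ℝ (Fin n))) (hX : IsCompact X)
    (F f : EuclideanSpace ℝ (Fin n) → EuclideanSpace ℝ (Fin m) → ℝ)
    (hF2 : ContDiff ℝ 2 (fun p : EuclideanSpace ℝ (Fin n) × EuclideanSpace ℝ (Fin m) => F p.1 p.2))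
    (hf2 : ContDiff ℝ 2 (fun p : EuclideanSpace ℝ (Fin n) × EuclideanSpace ℝ (Fin m) => f p.1 p.2))
    (LF Lf σ : ℝ) (hσ : 0 < σ)
    (hFlip : ∀ x a b, ‖gradient (F x) a - gradient (F x) b‖ ≤ LF * ‖a - b‖)
    (hfstrong : ∀ x, ConvexOn ℝ univ (fun w => f x w - σ / 2 * ‖w‖ ^ 2))
    (hflip : ∀ x a b, ‖gradient (f x) a - gradient (f x) b‖ ≤ Lf * ‖a - b‖)
    -- f is level-bounded in y uniformly in x ∈ X
    (hlevel : ∀ r : ℝ, Bornology.IsBounded {w : EuclideanSpace ℝ (Fin m) | ∃ x ∈ X, f x w ≤ r})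
    -- y*(x) : the unique minimizer of f(x,·)
    (ystar : EuclideanSpace ℝ (Fin n) → EuclideanSpace ℝ (Fin m))
    (hystar : ∀ x w, f x (ystar x) ≤ f x w)
    (s μ : ℝ) (hs : s ∈ Ioo 0 (1 / max LF Lf)) (hμ : μ ∈ Ioo (0 : ℝ) 1)
    (α : ℕ → ℝ) (hαpos : ∀ k, 0 < α k) (hαto : Tendsto α atTop (𝓝 0))
    (βlow : ℝ) (hβlow : 0 < βlow)
    (β : ℕ → ℝ) (hβ : ∀ k, β k ∈ Icc βlow 1)
    (y₀ : EuclideanSpace ℝ (Fin m))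
    (y : ℕ → EuclideanSpace ℝ (Fin n) → EuclideanSpace ℝ (Fin m))
    (hy0 : ∀ x, y 0 x = y₀)
    (hyrec : ∀ k x, y (k + 1) x =
      y k x - ((α k * μ * s) • gradient (F x) (y k x)
             + (β k * (1 - μ) * s) • gradient (f x) (y k x))) :
    ∀ ε > (0 : ℝ), ∃ N : ℕ, ∀ k ≥ N, ∀ x ∈ X, ‖y k x - ystar x‖ ≤ ε := by
  obtain ⟨hs0, hs1⟩ := hs
  obtain ⟨hμ0, hμ1⟩ := hμ
  set L := max LF Lf
  have hL : 0 < L := by by_contra! h; linarith [one_div_nonpos.2 h]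
  have hsL : s * L < 1 := (lt_div_iff₀ hL).1 (by simpa using hs1)
  obtain ⟨R, hR0, hR⟩ := (hX.isBounded_image_of_le
    (hf2.continuous.comp (continuous_id.prodMk continuous_const)).continuousOn hlevel
    fun x _ ↦ hystar x y₀).subset_closedBall_lt 0 0
  obtain ⟨C, hC0, hgradF⟩ := hX.exists_norm_gradient_le (hF2.of_le one_le_two) (L := L)
    (fun x a b ↦ (hFlip x a b).trans (by gcongr; exact le_max_left _ _))
    (isBounded_closedBall.subset hR)
  set t₀ := βlow * (1 - μ) * s
  have ht₀ : 0 < t₀ := mul_pos (mul_pos hβlow (sub_pos.2 hμ1)) hs0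
  have hρ : √(1 - t₀ * σ) < 1 := (Real.sqrt_lt' one_pos).2 (by nlinarith)
  have ha (k : ℕ) : 0 ≤ α k * μ * s := by have := hαpos k; positivity
  have hstart (x : X) : ‖y 0 x - ystar x‖ ≤ ‖y₀‖ + R := by
    rw [hy0]
    exact (norm_sub_le _ _).trans (by gcongr; simpa using hR ⟨x, x.2, rfl⟩)
  have hstep (k : ℕ) (x : X) : ‖y (k + 1) x - ystar x‖ ≤
      (√(1 - t₀ * σ) + α k * μ * s * L) * ‖y k x - ystar x‖ + α k * μ * s * C := by
    have hβμ : β k * (1 - μ) ≤ 1 := mul_le_one₀ (hβ k).2 (by linarith) (by linarith)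
    rw [hyrec]
    refine (strongConvexOn_iff_convex.2 (hfstrong x)).norm_sub_smul_add_smul_gradient_sub_le hσ.le
      ((hf2.comp (contDiff_const.prodMk contDiff_id)).differentiable two_ne_zero) hL
      (fun a b ↦ (hflip x a b).trans (by gcongr; exact le_max_right _ _))
      (IsLocalMin.gradient_eq_zero (.of_forall (hystar x))) ht₀.le ?_ ?_ (ha k) (hgradF x x.2 _)
    · exact mul_le_mul_of_nonneg_right (mul_le_mul_of_nonneg_right (hβ k).1 (by linarith)) hs0.le
    · nlinarith [mul_le_mul_of_nonneg_right hβμ (mul_pos hs0 hL).le]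
  intro ε hε
  obtain ⟨N, hN⟩ := eventually_atTop.1 <| eventually_forall_le_of_le_mul_add
    (e := fun (x : X) k ↦ ‖y k x - ystar x‖) (Real.sqrt_nonneg _) hρ ha
    (by simpa [mul_assoc] using hαto.mul_const (μ * s)) hL.le (by positivity) hC0 hstart hstep ε hε
  exact ⟨N, fun k hk x hx ↦ hN k hk ⟨x, hx⟩⟩

theorem stmt17 {n m : ℕ}
    (X : Set (EuclideanSpace ℝ (Fin n))) (hX : IsCompact X)
    (F f : EuclideanSpace ℝ (Fin n) → EuclideanSpace ℝ (Fin m) → ℝ)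
    (hF2 : ContDiff ℝ 2 (fun p : EuclideanSpace ℝ (Fin n) × EuclideanSpace ℝ (Fin m) => F p.1 p.2))
    (hf2 : ContDiff ℝ 2 (fun p : EuclideanSpace ℝ (Fin n) × EuclideanSpace ℝ (Fin m) => f p.1 p.2))
    (LF Lf σ : ℝ) (hσ : 0 < σ)
    (hFconv : ∀ x, ConvexOn ℝ univ (F x))
    (hFlip : ∀ x a b, ‖gradient (F x) a - gradient (F x) b‖ ≤ LF * ‖a - b‖)
    (hFbdd : ∀ x, BddBelow (Set.range (F x)))
    (hfstrong : ∀ x, ConvexOn ℝ univ (fun w => f x w - σ / 2 * ‖w‖ ^ 2))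
    (hflip : ∀ x a b, ‖gradient (f x) a - gradient (f x) b‖ ≤ Lf * ‖a - b‖)
    -- f is level-bounded in y uniformly in x ∈ X
    (hlevel : ∀ r : ℝ, Bornology.IsBounded {w : EuclideanSpace ℝ (Fin m) | ∃ x ∈ X, f x w ≤ r})
    -- y*(x) : the unique minimizer of f(x,·)
    (ystar : EuclideanSpace ℝ (Fin n) → EuclideanSpace ℝ (Fin m))
    (hystar : ∀ x w, f x (ystar x) ≤ f x w)
    (hystaruniq : ∀ x w, (∀ w', f x w ≤ f x w') → w = ystar x)
    (s μ : ℝ) (hs : s ∈ Ioo 0 (1 / max LF Lf)) (hμ : μ ∈ Ioo (0 : ℝ) 1)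
    (α : ℕ → ℝ) (hαpos : ∀ k, 0 < α k) (hαanti : Antitone α) (hαto : Tendsto α atTop (𝓝 0))
    (βlow cβ : ℝ) (hβlow : 0 < βlow) (hcβ : 0 < cβ)
    (β : ℕ → ℝ) (hβ : ∀ k, β k ∈ Icc βlow 1) (hβanti : Antitone β)
    (hβdiff : ∀ k ≥ 1, |β k - β (k - 1)| ≤ cβ / ((k : ℝ) + 1) ^ 2)
    (y₀ : EuclideanSpace ℝ (Fin m))
    (y : ℕ → EuclideanSpace ℝ (Fin n) → EuclideanSpace ℝ (Fin m))
    (hy0 : ∀ x, y 0 x = y₀)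
    (hyrec : ∀ k x, y (k + 1) x =
      y k x - ((α k * μ * s) • gradient (F x) (y k x)
             + (β k * (1 - μ) * s) • gradient (f x) (y k x))) :
    ∀ ε > (0 : ℝ), ∃ N : ℕ, ∀ k ≥ N, ∀ x ∈ X, ‖y k x - ystar x‖ ≤ ε :=
  stmt17_general X hX F f hF2 hf2 LF Lf σ hσ hFlip hfstrong hflip hlevel ystar hystar s μ hs hμ α
    hαpos hαto βlow hβlow β hβ y₀ y hy0 hyrec
end
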